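/- Assume moreover φ'(g) < 1. Define ξ_b(0) = ξ(0)(1−p)/((1−g)(1−φ'(g))), ξ_b(1) = 0, and ξ_b(l) = φ^{(l)}(g)(1−g)^{l−1}/(l! (1−φ'(g))) for l ≥ 2. Then ξ_b is a probability distribution on ℕ, and its generating function is φ_b(s) = Σ_{l≥0} ξ_b(l) s^l = s + ( φ(g + s(1−g)) − g − s(1−g) )/((1−g)(1−φ'(g))) for every s ∈ [0,1]. -/

import Mathlib

/-- The generating function `φ(s) = Σ_k ξ(k) s^k` of a distribution `ξ` on `ℕ`. -/
noncomputable def pgf (ξ : ℕ → ℝ) (s : ℝ) : ℝ := ∑' k : ℕ, ξ k * s ^ k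

/-- The `l`-th derivative of the generating function of `ξ` at `g`:
`φ^{(l)}(g) = Σ_{k≥l} (k!/(k-l)!) ξ(k) g^{k-l} = Σ_{j≥0} ((j+l)!/j!) ξ(j+l) g^j`. -/
noncomputable def pgfDeriv (ξ : ℕ → ℝ) (l : ℕ) (g : ℝ) : ℝ :=
  ∑' k : ℕ, ((Nat.factorial (k + l) : ℝ) / (Nat.factorial k : ℝ)) * ξ (k + l) * g ^ k

/-- The "black" offspring distribution `ξ_b` obtained from `ξ`, `p` and `g`. -/
noncomputable def xib (ξ : ℕ → ℝ) (p g : ℝ) : ℕ → ℝ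
  | 0 => ξ 0 * (1 - p) / ((1 - g) * (1 - pgfDeriv ξ 1 g))
  | 1 => 0
  | (l + 2) => pgfDeriv ξ (l + 2) g * (1 - g) ^ (l + 1) /
      ((Nat.factorial (l + 2) : ℝ) * (1 - pgfDeriv ξ 1 g))

/-!
With `t = s(1-g)`, rearranging the nonnegative double series
`φ(g+t) = Σ_n ξ(n) Σ_{k+l=n} C(n,l) g^k t^l` gives the Taylor expansion
`φ(g+t) = Σ_l φ^{(l)}(g)/l! · t^l`. Multiplied by `(1-g)(1-φ'(g))`, the terms `l ≥ 2` of
`Σ_l ξ_b(l) s^l` are exactly those of this expansion, and the two missing terms `φ(g)` and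
`φ'(g) t` are compensated by `ξ(0)(1-p) = φ(g) - g` and by the summand `s`.
At `s = 1` the right-hand side is `1` because `φ(1) = 1`.
-/

open Finset Nat

theorem pgfDeriv_zero (ξ : ℕ → ℝ) (g : ℝ) : pgfDeriv ξ 0 g = pgf ξ g := by
  simp [pgfDeriv, pgf, Nat.factorial_ne_zero]

theorem pgfDeriv_div_factorial (ξ : ℕ → ℝ) (l : ℕ) (g : ℝ) :
    pgfDeriv ξ l g / l ! = ∑' k : ℕ, ((k + l).choose l : ℝ) * ξ (k + l) * g ^ k := by
  rw [pgfDeriv, ← tsum_div_const]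
  congr 1 with k
  rw [← Nat.add_choose_mul_factorial_mul_factorial k l]
  push_cast
  field_simp

theorem pgfDeriv_nonneg {ξ : ℕ → ℝ} (hξ : ∀ k, 0 ≤ ξ k) (l : ℕ) {g : ℝ} (hg : 0 ≤ g) :
    0 ≤ pgfDeriv ξ l g :=
  tsum_nonneg fun k => by have := hξ (k + l); positivity

theorem hasSum_pgfDeriv_div_factorial_mul_pow {ξ : ℕ → ℝ} (hξ : ∀ k, 0 ≤ ξ k) {g t : ℝ}
    (hg : 0 ≤ g) (ht : 0 ≤ t) (hsum : Summable fun n => ξ n * (g + t) ^ n) :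
    HasSum (fun l => pgfDeriv ξ l g / l ! * t ^ l) (pgf ξ (g + t)) := by
  set f : ℕ × ℕ → ℝ := fun q => ((q.2 + q.1).choose q.1 : ℝ) * ξ (q.2 + q.1) * g ^ q.2 * t ^ q.1
  have hf : ∀ q, 0 ≤ f q := fun q => by have := hξ (q.2 + q.1); positivity
  set e := Finset.HasAntidiagonal.sigmaAntidiagonalEquivProd (A := ℕ)
  have hfiber : ∀ n, HasSum (fun x : antidiagonal n => (f ∘ e) ⟨n, x⟩) (ξ n * (g + t) ^ n) := by
    intro n
    suffices ξ n * (g + t) ^ n = ∑ q ∈ antidiagonal n, f q from this ▸ (antidiagonal n).hasSum f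
    rw [add_comm g, (Commute.all t g).add_pow', mul_sum]
    refine sum_congr rfl fun q hq => ?_
    rw [HasAntidiagonal.mem_antidiagonal] at hq
    simp only [f, ← hq, add_comm q.2, nsmul_eq_mul]
    ring
  have hfe : Summable (f ∘ e) := (summable_sigma_of_nonneg fun x => hf _).2
    ⟨fun n => (hfiber n).summable, hsum.congr fun n => (hfiber n).tsum_eq.symm⟩
  have htotal : HasSum f (pgf ξ (g + t)) :=
    e.hasSum_iff.1 (hsum.hasSum.sigma_of_hasSum hfiber hfe)
  refine htotal.prod_fiberwise fun l => ?_
  rw [pgfDeriv_div_factorial, ← tsum_mul_right]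
  exact (htotal.summable.prod_factor l).hasSum

theorem xib_nonneg {ξ : ℕ → ℝ} (hξ : ∀ k, 0 ≤ ξ k) {p g : ℝ} (hp : p ≤ 1) (hg0 : 0 ≤ g)
    (hg1 : g < 1) (hd : pgfDeriv ξ 1 g < 1) (l : ℕ) : 0 ≤ xib ξ p g l := by
  have hc : 0 ≤ (1 - g) * (1 - pgfDeriv ξ 1 g) := mul_nonneg (by linarith) (by linarith)
  match l with
  | 0 => exact div_nonneg (mul_nonneg (hξ 0) (by linarith)) hc
  | 1 => exact le_rfl
  | l + 2 =>
    have := pgfDeriv_nonneg hξ (l + 2) hg0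
    exact div_nonneg (by positivity) (mul_nonneg (by positivity) (by linarith))

theorem hasSum_xib_mul_pow {ξ : ℕ → ℝ} (hξ : ∀ k, 0 ≤ ξ k) {p g s : ℝ} (hg0 : 0 ≤ g)
    (hg1 : g < 1) (hfix : g = pgf ξ g - ξ 0 * (1 - p)) (hd : pgfDeriv ξ 1 g ≠ 1) (hs : 0 ≤ s)
    (hsum : Summable fun n => ξ n * (g + s * (1 - g)) ^ n) :
    HasSum (fun l => xib ξ p g l * s ^ l)
      (s + (pgf ξ (g + s * (1 - g)) - g - s * (1 - g)) / ((1 - g) * (1 - pgfDeriv ξ 1 g))) := by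
  have hg : 1 - g ≠ 0 := by linarith
  have hd' : 1 - pgfDeriv ξ 1 g ≠ 0 := sub_ne_zero.2 hd.symm
  have htail := (hasSum_nat_add_iff' 2).2 (hasSum_pgfDeriv_div_factorial_mul_pow hξ hg0
    (mul_nonneg hs (by linarith)) hsum)
  have hterm : ∀ l, xib ξ p g (l + 2) * s ^ (l + 2) =
      pgfDeriv ξ (l + 2) g / (l + 2)! * (s * (1 - g)) ^ (l + 2) /
        ((1 - g) * (1 - pgfDeriv ξ 1 g)) := fun l => by
    simp only [xib, mul_pow]
    field_simp
    ring
  have hvalue : s + (pgf ξ (g + s * (1 - g)) - g - s * (1 - g)) / ((1 - g) * (1 - pgfDeriv ξ 1 g))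
      - ∑ i ∈ range 2, xib ξ p g i * s ^ i =
      (pgf ξ (g + s * (1 - g)) - ∑ i ∈ range 2, pgfDeriv ξ i g / i ! * (s * (1 - g)) ^ i) /
        ((1 - g) * (1 - pgfDeriv ξ 1 g)) := by
    simp only [sum_range_succ, sum_range_zero, xib, pgfDeriv_zero]
    field_simp
    linear_combination -hfix
  rw [← hasSum_nat_add_iff' 2, funext hterm, hvalue]
  exact htail.div_const _

theorem xib_prob_and_pgf_general (ξ : ℕ → ℝ) (hnn : ∀ k, 0 ≤ ξ k) (hsum : (∑' k : ℕ, ξ k) = 1)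
    (p g : ℝ) (hp : p ∈ Set.Ioo (0 : ℝ) 1)
    (hg : g ∈ Set.Ioo (0 : ℝ) 1) (hfix : g = pgf ξ g - ξ 0 * (1 - p))
    (hd : pgfDeriv ξ 1 g < 1) :
    (∀ l : ℕ, 0 ≤ xib ξ p g l) ∧
    Summable (xib ξ p g) ∧ (∑' l : ℕ, xib ξ p g l) = 1 ∧
    ∀ s ∈ Set.Icc (0 : ℝ) 1,
      (∑' l : ℕ, xib ξ p g l * s ^ l)
        = s + (pgf ξ (g + s * (1 - g)) - g - s * (1 - g))
            / ((1 - g) * (1 - pgfDeriv ξ 1 g)) := by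
  obtain ⟨hg0, hg1⟩ := hg
  have hξsum : Summable ξ := by
    by_contra h
    simp [tsum_eq_zero_of_not_summable h] at hsum
  have hb : ∀ s ∈ Set.Icc (0 : ℝ) 1, HasSum (fun l => xib ξ p g l * s ^ l)
      (s + (pgf ξ (g + s * (1 - g)) - g - s * (1 - g)) / ((1 - g) * (1 - pgfDeriv ξ 1 g))) := by
    rintro s ⟨hs0, hs1⟩
    have hr0 : 0 ≤ g + s * (1 - g) := by nlinarith
    have hr1 : g + s * (1 - g) ≤ 1 := by nlinarith
    exact hasSum_xib_mul_pow hnn hg0.le hg1 hfix hd.ne hs0 (hξsum.of_nonneg_of_le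
      (fun n => mul_nonneg (hnn n) (pow_nonneg hr0 n))
      (fun n => mul_le_of_le_one_right (hnn n) (pow_le_one₀ hr0 hr1)))
  have hb1 : HasSum (xib ξ p g) 1 := by
    simpa [pgf, hsum] using hb 1 ⟨zero_le_one, le_rfl⟩
  exact ⟨xib_nonneg hnn hp.2.le hg0.le hg1 hd, hb1.summable, hb1.tsum_eq,
    fun s hs => (hb s hs).tsum_eq⟩

/-- Let `ξ` be a probability distribution on `ℕ` with `ξ(1)=0`, `ξ(0)>0`, and let
`p, g ∈ (0,1)` satisfy `g = φ(g) - ξ(0)(1-p)` and `φ'(g) < 1`. Then `ξ_b` is a probability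
distribution on `ℕ` with generating function
`φ_b(s) = s + (φ(g + s(1-g)) - g - s(1-g))/((1-g)(1-φ'(g)))` on `[0,1]`. -/
theorem xib_prob_and_pgf (ξ : ℕ → ℝ) (hnn : ∀ k, 0 ≤ ξ k) (hsum : (∑' k : ℕ, ξ k) = 1)
    (h1 : ξ 1 = 0) (h0 : 0 < ξ 0) (p g : ℝ) (hp : p ∈ Set.Ioo (0 : ℝ) 1)
    (hg : g ∈ Set.Ioo (0 : ℝ) 1) (hfix : g = pgf ξ g - ξ 0 * (1 - p))
    (hd : pgfDeriv ξ 1 g < 1) :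
    (∀ l : ℕ, 0 ≤ xib ξ p g l) ∧
    Summable (xib ξ p g) ∧ (∑' l : ℕ, xib ξ p g l) = 1 ∧
    ∀ s ∈ Set.Icc (0 : ℝ) 1,
      (∑' l : ℕ, xib ξ p g l * s ^ l)
        = s + (pgf ξ (g + s * (1 - g)) - g - s * (1 - g))
            / ((1 - g) * (1 - pgfDeriv ξ 1 g)) :=
  xib_prob_and_pgf_general ξ hnn hsum p g hp hg hfix hd
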